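/- Let k and l be positive integers with k ≠ l and k ≡ l (mod 3). Then, with cyclic indexing (η₄ := η₁, η₅ := η₂), one has Σ_{j=1}^{3} (η_{j+1} − η_j)/η_{j+2} = −27·k·l·(k+l)/((k+2l)·(2k+l)·(k−l)), and consequently E := (p²·L/9) · Σ_{j=1}^{3} (η_{j+1} − η_j)/η_{j+2} = −8π³·p·k·l·(k+l)/(9·L²), which is nonzero. -/

import Mathlib

noncomputable section

/-- `n = k² + k·l + l²` as a real number. -/
def nR (k l : ℕ) : ℝ := ((k ^ 2 + k * l + l ^ 2 : ℕ) : ℝ)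

/-- The critical length `L = 2π√(n/3)`. -/
def LL (k l : ℕ) : ℝ := 2 * Real.pi * Real.sqrt (nR k l / 3)

/-- `p = (2k+l)(k−l)(2l+k)/(3√3 n^{3/2})`. -/
def pK (k l : ℕ) : ℝ :=
  ((2 * k + l : ℕ) : ℝ) * ((k : ℝ) - (l : ℝ)) * ((2 * l + k : ℕ) : ℝ) /
    (3 * Real.sqrt 3 * nR k l ^ ((3 : ℝ) / 2))

/-- `η₁ = −(2πi/(3L))·(2k+l)`. -/
def eta1 (k l : ℕ) : ℂ :=
  -(2 * (Real.pi : ℂ) * Complex.I / (3 * ((LL k l : ℝ) : ℂ))) * ((2 * k + l : ℕ) : ℂ)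

/-- `η₂ = η₁ + 2πi·k/L`. -/
def eta2 (k l : ℕ) : ℂ :=
  eta1 k l + 2 * (Real.pi : ℂ) * Complex.I * (k : ℂ) / ((LL k l : ℝ) : ℂ)

/-- `η₃ = η₂ + 2πi·l/L`. -/
def eta3 (k l : ℕ) : ℂ :=
  eta2 k l + 2 * (Real.pi : ℂ) * Complex.I * (l : ℂ) / ((LL k l : ℝ) : ℂ)

end

/-!
Each `ηⱼ` is the common factor `2πi/(3L)` times an integer `aⱼ`, namely `a₁ = -(2k+l)`,
`a₂ = k-l`, `a₃ = k+2l`. The cyclic sum is invariant under scaling and equals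
`(a₁-a₂)(a₂-a₃)(a₃-a₁)/(a₁a₂a₃)`, whose numerator is `(-3k)(-3l)(3(k+l))`.
For `E`, the definitions of `p` and `L` combine to `27·p·L³ = 8π³(2k+l)(k-l)(2l+k)`.
-/

open Complex

theorem cyclic_sub_div_sum {K : Type*} [Field K] {a b c : K} (ha : a ≠ 0) (hb : b ≠ 0)
    (hc : c ≠ 0) :
    (b - a) / c + (c - b) / a + (a - c) / b = (a - b) * (b - c) * (c - a) / (a * b * c) := by
  field_simp
  ring

theorem cyclic_sub_div_sum_smul {K : Type*} [Field K] {t a b c : K} (ht : t ≠ 0) (ha : a ≠ 0)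
    (hb : b ≠ 0) (hc : c ≠ 0) :
    (t * b - t * a) / (t * c) + (t * c - t * b) / (t * a) + (t * a - t * c) / (t * b) =
      (a - b) * (b - c) * (c - a) / (a * b * c) := by
  simp only [← mul_sub, mul_div_mul_left _ _ ht]
  exact cyclic_sub_div_sum ha hb hc

theorem Real.rpow_three_halves {x : ℝ} (hx : 0 ≤ x) : x ^ (3 / 2 : ℝ) = x * √x := by
  rw [show (3 / 2 : ℝ) = 1 + 1 / 2 by norm_num, Real.rpow_add' hx (by norm_num), Real.rpow_one,
    Real.sqrt_eq_rpow]

theorem nR_pos {k l : ℕ} (hk : 0 < k) : 0 < nR k l := by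
  unfold nR
  positivity

theorem LL_pos {k l : ℕ} (hk : 0 < k) : 0 < LL k l := by
  have := nR_pos (l := l) hk
  unfold LL
  positivity

theorem ofReal_LL_ne_zero {k l : ℕ} (hk : 0 < k) : ((LL k l : ℝ) : ℂ) ≠ 0 :=
  ofReal_ne_zero.2 (LL_pos hk).ne'

noncomputable def etaScale (k l : ℕ) : ℂ := 2 * (Real.pi : ℂ) * I / (3 * ((LL k l : ℝ) : ℂ))

theorem etaScale_ne_zero {k l : ℕ} (hk : 0 < k) : etaScale k l ≠ 0 := by
  have hL := ofReal_LL_ne_zero (l := l) hk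
  have hπ : (Real.pi : ℂ) ≠ 0 := ofReal_ne_zero.2 Real.pi_ne_zero
  unfold etaScale
  exact div_ne_zero (mul_ne_zero (mul_ne_zero two_ne_zero hπ) I_ne_zero)
    (mul_ne_zero three_ne_zero hL)

theorem eta1_eq (k l : ℕ) : eta1 k l = etaScale k l * -(2 * k + l) := by
  rw [eta1, etaScale]
  push_cast
  ring

theorem eta2_eq {k l : ℕ} (hk : 0 < k) : eta2 k l = etaScale k l * (k - l) := by
  have hL := ofReal_LL_ne_zero (l := l) hk
  rw [eta2, eta1_eq, etaScale]
  field_simp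
  ring

theorem eta3_eq {k l : ℕ} (hk : 0 < k) : eta3 k l = etaScale k l * (k + 2 * l) := by
  have hL := ofReal_LL_ne_zero (l := l) hk
  rw [eta3, eta2_eq hk, etaScale]
  field_simp
  ring

theorem eta_cyclic_sum {k l : ℕ} (hk : 0 < k) (hne : k ≠ l) :
    (eta2 k l - eta1 k l) / eta3 k l + (eta3 k l - eta2 k l) / eta1 k l
        + (eta1 k l - eta3 k l) / eta2 k l =
      -27 * k * l * (k + l) / ((k + 2 * l) * (2 * k + l) * (k - l)) := by
  have h₁ : -(2 * k + l : ℂ) ≠ 0 := by norm_cast; omega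
  have h₂ : (k - l : ℂ) ≠ 0 := sub_ne_zero.2 (by exact_mod_cast hne)
  have h₃ : (k + 2 * l : ℂ) ≠ 0 := by norm_cast; omega
  rw [eta1_eq, eta2_eq hk, eta3_eq hk,
    cyclic_sub_div_sum_smul (etaScale_ne_zero hk) h₁ h₂ h₃]
  field_simp
  ring

theorem pK_mul_LL_pow_three {k l : ℕ} (hk : 0 < k) :
    pK k l * LL k l ^ 3 = 8 * Real.pi ^ 3 * ((2 * k + l) * (k - l) * (2 * l + k)) / 27 := by
  have hn := nR_pos (l := l) hk
  have h3 : √(3 : ℝ) ^ 2 = 3 := Real.sq_sqrt (by norm_num)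
  have hn' : √(nR k l) ^ 2 = nR k l := Real.sq_sqrt hn.le
  rw [pK, LL, Real.rpow_three_halves hn.le, Real.sqrt_div' _ (by norm_num)]
  push_cast
  field_simp
  rw [hn', show √(3 : ℝ) ^ 4 = (√3 ^ 2) ^ 2 by ring, h3]
  ring

theorem pK_ne_zero {k l : ℕ} (hk : 0 < k) (hne : k ≠ l) : pK k l ≠ 0 := by
  have hkl : (k - l : ℝ) ≠ 0 := sub_ne_zero.2 (by exact_mod_cast hne)
  refine left_ne_zero_of_mul (a := pK k l) (b := LL k l ^ 3) ?_
  rw [pK_mul_LL_pow_three hk]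
  have := Real.pi_pos
  positivity

theorem pK_sq_mul_LL_mul_cyclic_sum {k l : ℕ} (hk : 0 < k) (hne : k ≠ l) :
    pK k l ^ 2 * LL k l / 9 * (-27 * k * l * (k + l) / ((k + 2 * l) * (2 * k + l) * (k - l))) =
      -8 * Real.pi ^ 3 * pK k l * k * l * (k + l) / (9 * LL k l ^ 2) := by
  have hkl : (k - l : ℝ) ≠ 0 := sub_ne_zero.2 (by exact_mod_cast hne)
  have := LL_pos (l := l) hk
  have h := pK_mul_LL_pow_three (l := l) hk
  field_simp
  linear_combination (-27 * pK k l * l) * h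

theorem stmt_11_general (k l : ℕ) (hk : 0 < k) (hl : 0 < l) (hne : k ≠ l) :
    (eta2 k l - eta1 k l) / eta3 k l + (eta3 k l - eta2 k l) / eta1 k l
        + (eta1 k l - eta3 k l) / eta2 k l =
      ((-27 * (k : ℝ) * (l : ℝ) * ((k : ℝ) + (l : ℝ)) /
          (((k : ℝ) + 2 * (l : ℝ)) * (2 * (k : ℝ) + (l : ℝ)) * ((k : ℝ) - (l : ℝ))) : ℝ) : ℂ) ∧
    (((pK k l) ^ 2 * LL k l / 9 : ℝ) : ℂ) *
        ((eta2 k l - eta1 k l) / eta3 k l + (eta3 k l - eta2 k l) / eta1 k l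
          + (eta1 k l - eta3 k l) / eta2 k l) =
      ((-8 * Real.pi ^ 3 * pK k l * (k : ℝ) * (l : ℝ) * ((k : ℝ) + (l : ℝ)) /
          (9 * (LL k l) ^ 2) : ℝ) : ℂ) ∧
    (((pK k l) ^ 2 * LL k l / 9 : ℝ) : ℂ) *
        ((eta2 k l - eta1 k l) / eta3 k l + (eta3 k l - eta2 k l) / eta1 k l
          + (eta1 k l - eta3 k l) / eta2 k l) ≠ 0 := by
  have hsum := eta_cyclic_sum hk hne
  have hE : (((pK k l) ^ 2 * LL k l / 9 : ℝ) : ℂ) *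
      ((eta2 k l - eta1 k l) / eta3 k l + (eta3 k l - eta2 k l) / eta1 k l
        + (eta1 k l - eta3 k l) / eta2 k l) =
      ((-8 * Real.pi ^ 3 * pK k l * k * l * (k + l) / (9 * (LL k l) ^ 2) : ℝ) : ℂ) := by
    rw [hsum, ← pK_sq_mul_LL_mul_cyclic_sum hk hne]
    push_cast
    ring
  refine ⟨by rw [hsum]; push_cast; ring, hE, ?_⟩
  have := Real.pi_pos
  have := LL_pos (l := l) hk
  have := pK_ne_zero hk hne
  rw [hE, ofReal_ne_zero]
  positivity

theorem stmt_11 (k l : ℕ) (hk : 0 < k) (hl : 0 < l) (hne : k ≠ l) (hmod : k ≡ l [MOD 3]) :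
    (eta2 k l - eta1 k l) / eta3 k l + (eta3 k l - eta2 k l) / eta1 k l
        + (eta1 k l - eta3 k l) / eta2 k l =
      ((-27 * (k : ℝ) * (l : ℝ) * ((k : ℝ) + (l : ℝ)) /
          (((k : ℝ) + 2 * (l : ℝ)) * (2 * (k : ℝ) + (l : ℝ)) * ((k : ℝ) - (l : ℝ))) : ℝ) : ℂ) ∧
    (((pK k l) ^ 2 * LL k l / 9 : ℝ) : ℂ) *
        ((eta2 k l - eta1 k l) / eta3 k l + (eta3 k l - eta2 k l) / eta1 k l
          + (eta1 k l - eta3 k l) / eta2 k l) =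
      ((-8 * Real.pi ^ 3 * pK k l * (k : ℝ) * (l : ℝ) * ((k : ℝ) + (l : ℝ)) /
          (9 * (LL k l) ^ 2) : ℝ) : ℂ) ∧
    (((pK k l) ^ 2 * LL k l / 9 : ℝ) : ℂ) *
        ((eta2 k l - eta1 k l) / eta3 k l + (eta3 k l - eta2 k l) / eta1 k l
          + (eta1 k l - eta3 k l) / eta2 k l) ≠ 0 :=
  stmt_11_general k l hk hl hne
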